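/- arXiv:2507.15611 — 2 statements merged into one kernel-verified Lean document; each statement's English description precedes it below -/
import Mathlib

section
/- For every natural number s ≥ 2, the bidegree (4, 4 + n_{s,1,2}) component of E, i.e. E^{4, 2^{s+3}+2^{s+1}+2^s+1}, is a one-dimensional F₂-vector space with basis the class of h₀c_s; in particular h₀c_s ≠ 0 in E. -/
noncomputable section

open MvPolynomial

/-- Generators of Chen's algebra `E` in homological degrees ≤ 4.
Here `g i` denotes the generator `g_{i+1}` (the family `g` starts at index 1). -/
inductive Gen : Type
  | h (i : ℕ)
  | c (i : ℕ)
  | d (i : ℕ)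
  | e (i : ℕ)
  | f (i : ℕ)
  | g (i : ℕ)
  | p (i : ℕ)
  | D3 (i : ℕ)
  | p' (i : ℕ)

/-- Homological degree of the generators. -/
def hdeg : Gen → ℕ
  | .h _ => 1
  | .c _ => 3
  | _ => 4

/-- Internal degree of the generators. -/
def ideg : Gen → ℕ
  | .h i => 2 ^ i
  | .c i => 2 ^ (i + 3) + 2 ^ (i + 1) + 2 ^ i
  | .d i => 2 ^ (i + 4) + 2 ^ (i + 1)
  | .e i => 2 ^ (i + 4) + 2 ^ (i + 2) + 2 ^ i
  | .f i => 2 ^ (i + 4) + 2 ^ (i + 2) + 2 ^ (i + 1)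
  | .g i => 2 ^ (i + 4) + 2 ^ (i + 3)      -- internal degree of `g_{i+1}`
  | .p i => 2 ^ (i + 5) + 2 ^ (i + 2) + 2 ^ i
  | .D3 i => 2 ^ (i + 6) + 2 ^ i
  | .p' i => 2 ^ (i + 6) + 2 ^ (i + 3) + 2 ^ i

abbrev P := MvPolynomial Gen (ZMod 2)

/-- Chen's relations in homological degrees ≤ 4:
`hᵢhᵢ₊₁ = 0`, `hᵢhᵢ₊₂² = 0`, `hᵢ²hᵢ₊₃² = 0`, `hᵢ³ = hᵢ₋₁²hᵢ₊₁` (i ≥ 1), and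
`hⱼcᵢ = 0` for `j ∈ {i-1, i, i+2, i+3}`. -/
def rels : Set P :=
  ⋃ i : ℕ,
    ({ X (Gen.h i) * X (Gen.h (i + 1)),
       X (Gen.h i) * X (Gen.h (i + 2)) ^ 2,
       X (Gen.h i) ^ 2 * X (Gen.h (i + 3)) ^ 2,
       X (Gen.h (i + 1)) ^ 3 - X (Gen.h i) ^ 2 * X (Gen.h (i + 2)),
       X (Gen.h i) * X (Gen.c (i + 1)),
       X (Gen.h i) * X (Gen.c i),
       X (Gen.h (i + 2)) * X (Gen.c i),
       X (Gen.h (i + 3)) * X (Gen.c i) } : Set P)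

def relIdeal : Ideal P := Ideal.span rels

/-- Chen's algebra `E`, isomorphic to `Ext_A^{k,*}(ℤ/2, ℤ/2)` in homological degrees `k ≤ 4`. -/
abbrev E := P ⧸ relIdeal

def mkE : P →ₐ[ZMod 2] E := Ideal.Quotient.mkₐ (ZMod 2) relIdeal

/-- The bidegree `(k, d)` component `E^{k,d}` of `E`: the image of the space of polynomials
that are weighted homogeneous of homological degree `k` and internal degree `d`. -/
def component (k d : ℕ) : Submodule (ZMod 2) E :=
  Submodule.map mkE.toLinearMap
    (weightedHomogeneousSubmodule (ZMod 2) hdeg k ⊓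
      weightedHomogeneousSubmodule (ZMod 2) ideg d)

/-- `n_{s,t,u} = 2^{s+t+u} + 2^{s+t} + 2^s - 3`. -/
def nstu (s t u : ℕ) : ℕ := 2 ^ (s + t + u) + 2 ^ (s + t) + 2 ^ s - 3

/-! A monomial of homological degree 4 is a single generator, a product `c_i h_j`, or a product
of four `h`'s, so its internal degree is a sum of at most four powers of two (no generator's
internal degree has more than three binary digits). The binary expansion of `11 · 2^s + 1` has the
four digits `0, s, s + 1, s + 3`, and a binary expansion is the unique shortest way to write a
number as a sum of powers of two. Hence the only monomials in bidegree `(4, 11 · 2^s + 1)` are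
`h₀c_s` and `h₀h_sh_{s+1}h_{s+3}`, and the latter vanishes because `h_sh_{s+1} = 0`. For `s ≥ 2`,
sending `h₀` and `c_s` to `1` and every other generator to `0` kills all relations, so
`h₀c_s ≠ 0`. -/

namespace Multiset

def twoPowSum (M : Multiset ℕ) : ℕ := (M.map (2 ^ ·)).sum

@[simp] lemma twoPowSum_zero : twoPowSum 0 = 0 := rfl

@[simp] lemma twoPowSum_singleton (a : ℕ) : twoPowSum {a} = 2 ^ a := by
  simp [twoPowSum]

@[simp] lemma twoPowSum_cons (a : ℕ) (M : Multiset ℕ) :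
    twoPowSum (a ::ₘ M) = 2 ^ a + twoPowSum M := by
  simp [twoPowSum]

lemma twoPowSum_map_succ (M : Multiset ℕ) : twoPowSum (M.map Nat.succ) = 2 * twoPowSum M := by
  induction M using Multiset.induction_on with
  | empty => rfl
  | cons a M ih => simp only [Nat.succ_eq_add_one, map_cons, twoPowSum_cons, pow_succ, ih]; ring

lemma card_le_twoPowSum (M : Multiset ℕ) : card M ≤ twoPowSum M := by
  induction M using Multiset.induction_on with
  | empty => rfl
  | cons a M ih =>
    have := Nat.one_le_two_pow (n := a)
    simp only [card_cons, twoPowSum_cons]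
    omega

lemma twoPowSum_mod_two (M : Multiset ℕ) : twoPowSum M % 2 = M.count 0 % 2 := by
  induction M using Multiset.induction_on with
  | empty => rfl
  | cons a M ih =>
    rcases Nat.eq_zero_or_pos a with rfl | ha
    · simp only [twoPowSum_cons, count_cons_self]; omega
    · rw [twoPowSum_cons, count_cons_of_ne ha.ne, Nat.add_mod, ih,
        Nat.two_pow_mod_two_eq_zero.2 ha]
      simp

lemma exists_eq_map_succ {T : Multiset ℕ} (hT : 0 ∉ T) : ∃ T' : Multiset ℕ, T = T'.map Nat.succ :=
  ⟨T.map Nat.pred, by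
    rw [map_map, eq_comm]
    exact (map_congr rfl fun x hx =>
      Nat.succ_pred_eq_of_ne_zero (ne_of_mem_of_not_mem hx hT)).trans (map_id T)⟩

/- Induction on `twoPowSum M + card M`, looking at the zeros: a zero of `S` is a zero of `M` by
parity and is cancelled; two zeros of `M` would merge into a `1`, giving a shorter representation;
without zeros, halve. -/
theorem eq_of_twoPowSum_eq {M S : Multiset ℕ} (hS : S.Nodup) (hcard : card M ≤ card S)
    (h : twoPowSum M = twoPowSum S) : M = S := by
  induction hn : twoPowSum M + card M using Nat.strong_induction_on generalizing M S with
  | _ n ih =>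
  have hparity := twoPowSum_mod_two M
  rw [h, twoPowSum_mod_two] at hparity
  by_cases h0S : 0 ∈ S
  · rw [count_eq_one_of_mem hS h0S] at hparity
    obtain ⟨M', rfl⟩ := exists_cons_of_mem (count_pos.1 (by omega) : 0 ∈ M)
    obtain ⟨S', rfl⟩ := exists_cons_of_mem h0S
    simp only [twoPowSum_cons, card_cons, add_le_add_iff_right, add_right_inj] at h hcard hn
    rw [ih _ (by omega) (nodup_cons.1 hS).2 hcard h rfl]
  by_cases h0M : 0 ∈ M
  · exfalso
    rw [count_eq_zero.2 h0S] at hparity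
    obtain ⟨M', rfl⟩ := exists_cons_of_mem h0M
    obtain ⟨M'', rfl⟩ := exists_cons_of_mem
      (count_pos.1 (by rw [count_cons_self] at hparity; omega) : 0 ∈ M')
    have hmerge := ih (twoPowSum (1 ::ₘ M'') + card (1 ::ₘ M''))
      (by simp only [twoPowSum_cons, card_cons] at hn ⊢; omega) (S := S) hS
      (by simp only [card_cons] at hcard ⊢; omega)
      (by simp only [twoPowSum_cons] at h ⊢; omega) rfl
    rw [← hmerge] at hcard
    simp only [card_cons] at hcard
    omega
  obtain ⟨M', rfl⟩ := exists_eq_map_succ h0M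
  obtain ⟨S', rfl⟩ := exists_eq_map_succ h0S
  simp only [twoPowSum_map_succ, card_map] at h hcard hn
  have hpos := card_le_twoPowSum M'
  rcases Nat.eq_zero_or_pos (card M') with hM0 | hMpos
  · obtain rfl := card_eq_zero.1 hM0
    have := card_le_twoPowSum S'
    rw [twoPowSum_zero] at h
    rw [card_eq_zero.1 (by omega : card S' = 0)]
  rw [ih _ (by omega) (hS.of_map _) hcard (by omega) rfl]

lemma toFinsupp_cons {σ : Type*} [DecidableEq σ] (a : σ) (M : Multiset σ) :
    toFinsupp (a ::ₘ M) = Finsupp.single a 1 + toFinsupp M := by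
  rw [← singleton_add, toFinsupp_add, toFinsupp_singleton]

end Multiset

open Multiset

lemma Finsupp.weight_toFinsupp {σ : Type*} [DecidableEq σ] (w : σ → ℕ) (M : Multiset σ) :
    weight w (toFinsupp M) = (M.map w).sum := by
  induction M using Multiset.induction_on with
  | empty => simp
  | cons a M ih => simp [toFinsupp_cons, ih, weight_single]

lemma MvPolynomial.monomial_toFinsupp {σ R : Type*} [DecidableEq σ] [CommSemiring R]
    (M : Multiset σ) : monomial (toFinsupp M) (1 : R) = (M.map X).prod := by
  induction M using Multiset.induction_on with
  | empty => simp
  | cons a M ih => rw [toFinsupp_cons, monomial_single_add, ih, pow_one, map_cons, prod_cons]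

def idegBits : Gen → Multiset ℕ
  | .h i => {i}
  | .c i => {i, i + 1, i + 3}
  | .d i => {i + 1, i + 4}
  | .e i => {i, i + 2, i + 4}
  | .f i => {i + 1, i + 2, i + 4}
  | .g i => {i + 3, i + 4}
  | .p i => {i, i + 2, i + 5}
  | .D3 i => {i, i + 6}
  | .p' i => {i, i + 3, i + 6}

lemma twoPowSum_idegBits (x : Gen) : twoPowSum (idegBits x) = ideg x := by
  cases x <;> simp [idegBits, ideg] <;> ring

lemma card_idegBits_le (x : Gen) : card (idegBits x) ≤ 3 := by
  cases x <;> simp [idegBits]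

lemma twoPowSum_bind_idegBits (M : Multiset Gen) :
    twoPowSum (M.bind idegBits) = (M.map ideg).sum := by
  induction M using Multiset.induction_on with
  | empty => rfl
  | cons x M ih => simp [twoPowSum, ← ih, ← twoPowSum_idegBits]

lemma hdeg_pos (x : Gen) : 0 < hdeg x := by
  cases x <;> simp [hdeg]

lemma eq_zero_of_sum_map_hdeg {M : Multiset Gen} (h : (M.map hdeg).sum = 0) : M = 0 :=
  eq_zero_of_forall_notMem fun x hx =>
    (hdeg_pos x).ne' (sum_eq_zero_iff.1 h _ (mem_map_of_mem hdeg hx))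

lemma exists_cons_of_sum_map_hdeg {M : Multiset Gen} {k : ℕ} (h : (M.map hdeg).sum = k + 1) :
    ∃ x M', M = x ::ₘ M' ∧ hdeg x + (M'.map hdeg).sum = k + 1 := by
  obtain ⟨x, hx⟩ := exists_mem_of_ne_zero (by rintro rfl; simp at h : M ≠ 0)
  obtain ⟨M', rfl⟩ := exists_cons_of_mem hx
  exact ⟨x, M', rfl, by simpa using h⟩

lemma eq_of_sum_map_hdeg_eq_one {M : Multiset Gen} (h : (M.map hdeg).sum = 1) :
    ∃ j, M = {.h j} := by
  obtain ⟨x, M', rfl, hx⟩ := exists_cons_of_sum_map_hdeg h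
  cases x <;> simp only [hdeg] at hx <;> try omega
  case h j => exact ⟨j, by rw [eq_zero_of_sum_map_hdeg (by omega : (M'.map hdeg).sum = 0)]; rfl⟩

lemma eq_of_sum_map_hdeg_eq_two {M : Multiset Gen} (h : (M.map hdeg).sum = 2) :
    ∃ a b, M = {.h a, .h b} := by
  obtain ⟨x, M', rfl, hx⟩ := exists_cons_of_sum_map_hdeg h
  cases x <;> simp only [hdeg] at hx <;> try omega
  case h a =>
    obtain ⟨b, rfl⟩ := eq_of_sum_map_hdeg_eq_one (by omega : (M'.map hdeg).sum = 1)
    exact ⟨a, b, rfl⟩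

lemma eq_of_sum_map_hdeg_eq_three {M : Multiset Gen} (h : (M.map hdeg).sum = 3) :
    (∃ i, M = {.c i}) ∨ ∃ a b c, M = {.h a, .h b, .h c} := by
  obtain ⟨x, M', rfl, hx⟩ := exists_cons_of_sum_map_hdeg h
  cases x <;> simp only [hdeg] at hx <;> try omega
  case h a =>
    obtain ⟨b, c, rfl⟩ := eq_of_sum_map_hdeg_eq_two (by omega : (M'.map hdeg).sum = 2)
    exact .inr ⟨a, b, c, rfl⟩
  case c i =>
    exact .inl ⟨i, by rw [eq_zero_of_sum_map_hdeg (by omega : (M'.map hdeg).sum = 0)]; rfl⟩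

lemma eq_of_sum_map_hdeg_eq_four {M : Multiset Gen} (h : (M.map hdeg).sum = 4) :
    (∃ x, hdeg x = 4 ∧ M = {x}) ∨ (∃ i j, M = {.c i, .h j}) ∨
      ∃ a b c e, M = {.h a, .h b, .h c, .h e} := by
  obtain ⟨x, M', rfl, hx⟩ := exists_cons_of_sum_map_hdeg h
  cases x <;> simp only [hdeg] at hx
  case h a =>
    rcases eq_of_sum_map_hdeg_eq_three (by omega : (M'.map hdeg).sum = 3)
      with ⟨i, rfl⟩ | ⟨b, c, e, rfl⟩
    · exact .inr (.inl ⟨i, a, cons_swap _ _ _⟩)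
    · exact .inr (.inr ⟨a, b, c, e, rfl⟩)
  case c i =>
    obtain ⟨j, rfl⟩ := eq_of_sum_map_hdeg_eq_one (by omega : (M'.map hdeg).sum = 1)
    exact .inr (.inl ⟨i, j, rfl⟩)
  all_goals
    rw [eq_zero_of_sum_map_hdeg (by omega : (M'.map hdeg).sum = 0)]
    exact .inl ⟨_, rfl, rfl⟩

lemma mkE_eq_zero_iff {p : P} : mkE p = 0 ↔ p ∈ relIdeal :=
  Ideal.Quotient.eq_zero_iff_mem

lemma X_h_mul_X_h_succ_mem_relIdeal (i : ℕ) : X (Gen.h i) * X (Gen.h (i + 1)) ∈ relIdeal :=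
  Ideal.subset_span (Set.mem_iUnion.2 ⟨i, by simp⟩)

lemma component_le_of_forall {k d : ℕ} {T : Submodule (ZMod 2) E}
    (hT : ∀ M : Multiset Gen, (M.map hdeg).sum = k → (M.map ideg).sum = d →
      mkE (M.map X).prod ∈ T) :
    component k d ≤ T := by
  classical
  rintro _ ⟨p, ⟨hk, hd⟩, rfl⟩
  rw [SetLike.mem_coe, mem_weightedHomogeneousSubmodule] at hk hd
  rw [p.as_sum, map_sum]
  refine Submodule.sum_mem _ fun m hm => ?_
  obtain ⟨M, rfl⟩ := Multiset.toFinsupp.surjective m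
  have hmk := hk (mem_support_iff.1 hm)
  have hmd := hd (mem_support_iff.1 hm)
  rw [Finsupp.weight_toFinsupp] at hmk hmd
  rw [← mul_one (coeff _ p), ← smul_eq_mul, ← smul_monomial, map_smul, AlgHom.toLinearMap_apply,
    monomial_toFinsupp]
  exact T.smul_mem _ (hT M hmk hmd)

lemma mkE_prod_X_mem_component (M : Multiset Gen) :
    mkE (M.map X).prod ∈ component (M.map hdeg).sum (M.map ideg).sum := by
  classical
  refine ⟨(M.map X).prod, ⟨?_, ?_⟩, rfl⟩ <;>
  · rw [SetLike.mem_coe, mem_weightedHomogeneousSubmodule, ← monomial_toFinsupp,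
      ← Finsupp.weight_toFinsupp]
    exact isWeightedHomogeneous_monomial _ _ _ rfl

lemma eq_or_prod_X_mem_relIdeal {s : ℕ} (hs : 2 ≤ s) {M : Multiset Gen}
    (hk : (M.map hdeg).sum = 4) (hd : (M.map ideg).sum = 2 ^ (s + 3) + 2 ^ (s + 1) + 2 ^ s + 1) :
    M = {.h 0, .c s} ∨ (M.map X).prod ∈ relIdeal := by
  set S : Multiset ℕ := {0, s, s + 1, s + 3}
  have hS : S.Nodup := by
    simp only [S, insert_eq_cons, nodup_cons, mem_cons, mem_singleton, nodup_singleton, and_true]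
    omega
  have hsum : twoPowSum (M.bind idegBits) = twoPowSum S := by
    rw [twoPowSum_bind_idegBits, hd]
    simp only [S, insert_eq_cons, twoPowSum_cons, twoPowSum_singleton]
    ring
  rcases eq_of_sum_map_hdeg_eq_four hk with ⟨x, -, rfl⟩ | ⟨i, j, rfl⟩ | ⟨a, b, c, e, rfl⟩
  · have hx := card_idegBits_le x
    have := congrArg card (eq_of_twoPowSum_eq hS (by simp [S]; omega) hsum)
    simp only [S, singleton_bind, insert_eq_cons, card_cons, card_singleton] at this
    omega
  · have hbits : i ::ₘ (i + 1) ::ₘ (i + 3) ::ₘ {j} = S := by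
      simpa [idegBits] using eq_of_twoPowSum_eq hS (by simp [S, idegBits]) hsum
    have hmem : ∀ n, n ∈ i ::ₘ (i + 1) ::ₘ (i + 3) ::ₘ {j} → n ∈ S := fun n hn => hbits ▸ hn
    have hi : i = s := by
      have h0 := hmem i (by simp)
      have h1 := hmem (i + 1) (by simp)
      have h3 := hmem (i + 3) (by simp)
      simp only [S, insert_eq_cons, mem_cons, mem_singleton] at h0 h1 h3
      omega
    have hj : j = 0 := by
      have := congrArg Multiset.sum hbits
      simp only [S, sum_cons, sum_singleton, insert_eq_cons] at this
      omega
    subst hi hj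
    exact .inl (cons_swap _ _ _)
  · have hbits : c ::ₘ b ::ₘ a ::ₘ {e} = S := by
      simpa [idegBits] using eq_of_twoPowSum_eq hS (by simp [S, idegBits]) hsum
    have hprod : ((({Gen.h a, Gen.h b, Gen.h c, Gen.h e} : Multiset Gen).map X).prod : P)
        = (X (Gen.h s) * X (Gen.h (s + 1))) * (X (Gen.h 0) * X (Gen.h (s + 3))) :=
      calc _ = ((c ::ₘ b ::ₘ a ::ₘ {e}).map (X ∘ Gen.h)).prod := by
            simp only [insert_eq_cons, map_cons, map_singleton, prod_cons, prod_singleton,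
              Function.comp_apply]
            ring
        _ = _ := by
            rw [hbits]
            simp only [S, insert_eq_cons, map_cons, map_singleton, prod_cons, prod_singleton,
              Function.comp_apply]
            ring
    exact .inr (hprod ▸ Ideal.mul_mem_right _ _ (X_h_mul_X_h_succ_mem_relIdeal s))

def h0csIndicator (s : ℕ) : Gen → ZMod 2
  | .h i => if i = 0 then 1 else 0
  | .c i => if i = s then 1 else 0
  | _ => 0

lemma relIdeal_le_ker_aeval_h0csIndicator {s : ℕ} (hs : 2 ≤ s) :
    relIdeal ≤ RingHom.ker (aeval (h0csIndicator s)) := by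
  rw [relIdeal, Ideal.span_le]
  intro x hx
  simp only [rels, Set.mem_iUnion, Set.mem_insert_iff, Set.mem_singleton_iff] at hx
  obtain ⟨i, hx⟩ := hx
  rcases hx with rfl | rfl | rfl | rfl | rfl | rfl | rfl | rfl <;>
    simp [h0csIndicator] <;> omega

lemma mkE_h0_mul_c_ne_zero {s : ℕ} (hs : 2 ≤ s) : mkE (X (Gen.h 0) * X (Gen.c s)) ≠ 0 := by
  intro h
  simpa [h0csIndicator] using relIdeal_le_ker_aeval_h0csIndicator hs (mkE_eq_zero_iff.1 h)

/-- For every `s ≥ 2`, `E^{4, 4 + n_{s,1,2}} = E^{4, 2^{s+3}+2^{s+1}+2^s+1}` is one-dimensional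
over `F₂` with basis the class of `h₀c_s`; in particular `h₀c_s ≠ 0` in `E`. -/
theorem stmt2 (s : ℕ) (hs : 2 ≤ s) :
    component 4 (2 ^ (s + 3) + 2 ^ (s + 1) + 2 ^ s + 1) =
        Submodule.span (ZMod 2) {mkE (X (Gen.h 0) * X (Gen.c s))} ∧
      mkE (X (Gen.h 0) * X (Gen.c s)) ≠ 0 := by
  refine ⟨le_antisymm (component_le_of_forall fun M hk hd => ?_) ?_, mkE_h0_mul_c_ne_zero hs⟩
  · rcases eq_or_prod_X_mem_relIdeal hs hk hd with rfl | hmem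
    · simp [Submodule.mem_span_singleton_self]
    · rw [mkE_eq_zero_iff.2 hmem]
      exact zero_mem _
  · have h := mkE_prod_X_mem_component {.h 0, .c s}
    simp only [hdeg, ideg, insert_eq_cons, map_cons, map_singleton, prod_cons, prod_singleton,
      sum_cons, sum_singleton] at h
    rw [Submodule.span_le, Set.singleton_subset_iff, SetLike.mem_coe]
    convert h using 2
    ring
end
end

section
/- For all natural numbers s ≥ 2, t ≥ 2, u ≥ 2, the bidegree (4, 4 + n_{s,t,u}) component of E, i.e. E^{4, 2^{s+t+u}+2^{s+t}+2^s+1}, is a one-dimensional F₂-vector space with basis the class of the monomial h₀ h_s h_{s+t} h_{s+t+u}; in particular this monomial is nonzero in E. -/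
noncomputable section

open MvPolynomial

/-!
Let `S = {0, s, s + t, s + t + u}`, a set with no two consecutive elements.
Write the internal degree of every generator in binary (`Gen.bits`): a generator of homological
degree `k` has at most `k` binary digits, and `h_i`, `c_i` are the only ones with exactly `k`.
A number whose binary expansion has `|S|` digits is not a sum of fewer than `|S|` powers of two,
since a repeated power of two can be carried into a shorter sum. So a monomial of bidegree
`(|S|, ∑_{i ∈ S} 2^i)` has digits exactly `S` and consists of `h_i`'s and `c_i`'s; the adjacent
digits `i, i + 1` of `c_i` rule it out, leaving `h_S = ∏_{i ∈ S} h_i`.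

`h_S` survives in `E` because every relation lies in the ideal spanned by the monomials not
dividing `h_S`: each monomial of a relation contains a square, some `c_i`, or a product
`h_i h_{i+1}`, and `h_S` is squarefree, free of `c`'s and has no consecutive indices.
-/

namespace Multiset

theorem exists_finset_sum_two_pow_eq_of_not_nodup {M : Multiset ℕ} (hM : ¬M.Nodup) :
    ∃ T : Finset ℕ, ∑ i ∈ T, 2 ^ i = (M.map (2 ^ ·)).sum ∧ T.card < card M := by
  induction hn : card M using Nat.strong_induction_on generalizing M with
  | _ n ih =>
  obtain ⟨x, hx⟩ : ∃ x, 1 < M.count x := by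
    simpa [nodup_iff_count_le_one] using hM
  obtain ⟨M', rfl⟩ := le_iff_exists_add.mp (le_count_iff_replicate_le.mp hx)
  set M₁ := (x + 1) ::ₘ M'
  have hsum : (M₁.map (2 ^ ·)).sum = ((replicate 2 x + M').map (2 ^ ·)).sum := by
    simp [M₁, pow_succ]; ring
  have hcard : card M₁ < n := by simp [M₁, ← hn]
  by_cases h₁ : M₁.Nodup
  · exact ⟨⟨M₁, h₁⟩, hsum, hn ▸ hcard⟩
  · obtain ⟨T, hT, hTcard⟩ := ih _ hcard h₁ rfl
    exact ⟨T, hT.trans hsum, hTcard.trans (hn ▸ hcard)⟩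

theorem eq_of_sum_map_two_pow_eq {M : Multiset ℕ} {S : Finset ℕ}
    (hsum : (M.map (2 ^ ·)).sum = ∑ i ∈ S, 2 ^ i) (hcard : card M ≤ S.card) : M = S.val := by
  by_cases hM : M.Nodup
  · exact congrArg Finset.val (Finset.geomSum_injective (n := 2) le_rfl (a₁ := ⟨M, hM⟩) hsum)
  · obtain ⟨T, hT, hTcard⟩ := exists_finset_sum_two_pow_eq_of_not_nodup hM
    obtain rfl := Finset.geomSum_injective le_rfl (hT.trans hsum)
    omega

end Multiset

theorem Finsupp.weight_eq_sum_map_toMultiset {σ : Type*} (w : σ → ℕ) (v : σ →₀ ℕ) :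
    Finsupp.weight w v = ((Finsupp.toMultiset v).map w).sum := by
  induction v using Finsupp.induction_linear with
  | zero => simp
  | add v₁ v₂ h₁ h₂ => simp [h₁, h₂]
  | single a n => simp [Finsupp.weight_apply, Multiset.map_nsmul, Multiset.sum_nsmul]

namespace MvPolynomial

variable {σ R : Type*} [CommSemiring R]

def nonDivisorsIdeal (m : σ →₀ ℕ) : Ideal (MvPolynomial σ R) :=
  Ideal.span ((fun v => monomial v 1) '' {v | ¬v ≤ m})

theorem monomial_one_notMem_nonDivisorsIdeal [Nontrivial R] (m : σ →₀ ℕ) :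
    monomial m (1 : R) ∉ nonDivisorsIdeal m := by
  rw [nonDivisorsIdeal, mem_ideal_span_monomial_image]
  push Not
  exact ⟨m, by classical simp [coeff_monomial], fun _ h => h⟩

theorem X_pow_mem_nonDivisorsIdeal {m : σ →₀ ℕ} {a : σ} {k : ℕ} (h : m a < k) :
    X a ^ k ∈ nonDivisorsIdeal (R := R) m :=
  Ideal.subset_span ⟨Finsupp.single a k, fun hle => h.not_ge (by simpa using hle a),
    X_pow_eq_monomial.symm⟩

theorem X_mem_nonDivisorsIdeal {m : σ →₀ ℕ} {a : σ} (h : m a = 0) :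
    X a ∈ nonDivisorsIdeal (R := R) m := by
  simpa using X_pow_mem_nonDivisorsIdeal (R := R) (k := 1) (h ▸ one_pos)

end MvPolynomial

namespace Gen

def bits : Gen → Multiset ℕ
  | .h i => {i}
  | .c i => {i, i + 1, i + 3}
  | .d i => {i + 1, i + 4}
  | .e i => {i, i + 2, i + 4}
  | .f i => {i + 1, i + 2, i + 4}
  | .g i => {i + 3, i + 4}
  | .p i => {i, i + 2, i + 5}
  | .D3 i => {i, i + 6}
  | .p' i => {i, i + 3, i + 6}

theorem sum_map_two_pow_bits (g : Gen) : ((bits g).map (2 ^ ·)).sum = ideg g := by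
  cases g <;> simp [bits, ideg] <;> ring

theorem card_bits_le_hdeg (g : Gen) : Multiset.card (bits g) ≤ hdeg g := by
  cases g <;> simp [bits, hdeg]

theorem exists_eq_h_or_c_of_card_bits_eq_hdeg {g : Gen} (hg : Multiset.card (bits g) = hdeg g) :
    (∃ i, g = h i) ∨ ∃ i, g = c i := by
  cases g <;> simp_all [bits, hdeg]

end Gen

open Multiset in
theorem eq_map_h_of_sum_map_ideg_eq {S : Finset ℕ} (hS : ∀ i ∈ S, i + 1 ∉ S)
    {G : Multiset Gen} (hhdeg : (G.map hdeg).sum ≤ S.card)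
    (hideg : (G.map ideg).sum = ∑ i ∈ S, 2 ^ i) :
    G = S.val.map Gen.h := by
  have hcard_le : (G.map (card ∘ Gen.bits)).sum ≤ (G.map hdeg).sum :=
    sum_map_le_sum_map _ _ fun g _ => Gen.card_bits_le_hdeg g
  have hbits : G.bind Gen.bits = S.val := by
    refine eq_of_sum_map_two_pow_eq ?_ (by rw [card_bind]; omega)
    rw [map_bind, sum_bind, ← hideg]
    simp only [Gen.sum_map_two_pow_bits]
  have hcard : (G.map hdeg).sum ≤ (G.map (card ∘ Gen.bits)).sum := by
    rw [← card_bind, hbits, Finset.card_val]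
    exact hhdeg
  have hG : ∀ g ∈ G, ∃ i, g = Gen.h i := by
    intro g hg
    have hg' : card (Gen.bits g) = hdeg g := by
      refine (Gen.card_bits_le_hdeg g).antisymm (not_lt.mp fun hlt => hcard.not_gt ?_)
      exact sum_lt_sum (fun g _ => Gen.card_bits_le_hdeg g) ⟨g, hg, hlt⟩
    obtain hgh | ⟨i, rfl⟩ := Gen.exists_eq_h_or_c_of_card_bits_eq_hdeg hg'
    · exact hgh
    · have hmem : ∀ j ∈ Gen.bits (Gen.c i), j ∈ S := fun j hj => by
        rw [← Finset.mem_val, ← hbits]; exact mem_bind.mpr ⟨_, hg, hj⟩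
      exact absurd (hmem (i + 1) (by simp [Gen.bits])) (hS i (hmem i (by simp [Gen.bits])))
  calc G = G.bind fun g => {g} := by rw [bind_singleton, map_id']
    _ = G.bind fun g => (Gen.bits g).map Gen.h := bind_congr fun g hg => by
        obtain ⟨i, rfl⟩ := hG g hg; rfl
    _ = S.val.map Gen.h := by rw [← map_bind, hbits]

def hExponent (S : Finset ℕ) : Gen →₀ ℕ := ∑ i ∈ S, Finsupp.single (Gen.h i) 1

theorem prod_X_h_eq_monomial (S : Finset ℕ) :
    ∏ i ∈ S, (X (Gen.h i) : P) = monomial (hExponent S) 1 :=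
  (monomial_sum_one S _).symm

theorem toMultiset_hExponent (S : Finset ℕ) :
    Finsupp.toMultiset (hExponent S) = S.val.map Gen.h := by
  rw [hExponent, map_sum, Finset.sum_eq_multiset_sum,
    ← Multiset.sum_map_singleton (S.val.map Gen.h), Multiset.map_map]
  simp

theorem weight_hdeg_hExponent (S : Finset ℕ) : Finsupp.weight hdeg (hExponent S) = S.card := by
  simp [Finsupp.weight_eq_sum_map_toMultiset, toMultiset_hExponent, hdeg]

theorem weight_ideg_hExponent (S : Finset ℕ) :
    Finsupp.weight ideg (hExponent S) = ∑ i ∈ S, 2 ^ i := by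
  simp [Finsupp.weight_eq_sum_map_toMultiset, toMultiset_hExponent, ideg]

theorem eq_hExponent_of_weight_eq {S : Finset ℕ} (hS : ∀ i ∈ S, i + 1 ∉ S)
    {v : Gen →₀ ℕ}
    (hhdeg : Finsupp.weight hdeg v ≤ S.card)
    (hideg : Finsupp.weight ideg v = ∑ i ∈ S, 2 ^ i) : v = hExponent S := by
  rw [Finsupp.weight_eq_sum_map_toMultiset] at hhdeg hideg
  classical
  ext g
  rw [← Finsupp.count_toMultiset, ← Finsupp.count_toMultiset, toMultiset_hExponent,
    eq_map_h_of_sum_map_ideg_eq hS hhdeg hideg]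

theorem bihomogeneous_eq_span_monomial_hExponent {S : Finset ℕ} (hS : ∀ i ∈ S, i + 1 ∉ S) :
    weightedHomogeneousSubmodule (ZMod 2) hdeg S.card ⊓
        weightedHomogeneousSubmodule (ZMod 2) ideg (∑ i ∈ S, 2 ^ i) =
      Submodule.span (ZMod 2) {monomial (hExponent S) 1} := by
  apply le_antisymm
  · rintro p ⟨hp₁, hp₂⟩
    rw [SetLike.mem_coe, mem_weightedHomogeneousSubmodule] at hp₁ hp₂
    have hsupp : ∀ v ∈ p.support, v = hExponent S := fun v hv => by
      rw [mem_support_iff] at hv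
      exact eq_hExponent_of_weight_eq hS (hp₁ hv).le (hp₂ hv)
    rw [p.as_sum]
    refine Submodule.sum_mem _ fun v hv => ?_
    rw [hsupp v hv, ← mul_one (coeff _ p), ← smul_eq_mul, ← smul_monomial]
    exact Submodule.smul_mem _ _ (Submodule.subset_span rfl)
  · rw [Submodule.span_le, Set.singleton_subset_iff]
    exact ⟨isWeightedHomogeneous_monomial _ _ _ (weight_hdeg_hExponent S),
      isWeightedHomogeneous_monomial _ _ _ (weight_ideg_hExponent S)⟩

theorem hExponent_apply_le_one (S : Finset ℕ) (g : Gen) : hExponent S g ≤ 1 := by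
  classical
  rw [← Finsupp.count_toMultiset, toMultiset_hExponent]
  exact Multiset.nodup_iff_count_le_one.mp (S.nodup.map fun _ _ => Gen.h.inj) g

theorem hExponent_apply_eq_zero {S : Finset ℕ} {g : Gen} (hg : ∀ i ∈ S, Gen.h i ≠ g) :
    hExponent S g = 0 := by
  classical
  rw [← Finsupp.count_toMultiset, toMultiset_hExponent, Multiset.count_eq_zero]
  simpa using hg

theorem relIdeal_le_nonDivisorsIdeal_hExponent {S : Finset ℕ} (hS : ∀ i ∈ S, i + 1 ∉ S) :
    relIdeal ≤ nonDivisorsIdeal (hExponent S) := by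
  have hsq (g : Gen) {k : ℕ} (hk : 2 ≤ k) : (X g ^ k : P) ∈ nonDivisorsIdeal (hExponent S) :=
    X_pow_mem_nonDivisorsIdeal ((hExponent_apply_le_one S g).trans_lt hk)
  have hc (j : ℕ) : (X (Gen.c j) : P) ∈ nonDivisorsIdeal (hExponent S) :=
    X_mem_nonDivisorsIdeal (hExponent_apply_eq_zero (by simp))
  rw [relIdeal, Ideal.span_le]
  simp only [rels, Set.iUnion_subset_iff, Set.insert_subset_iff, Set.singleton_subset_iff,
    SetLike.mem_coe]
  intro i
  refine ⟨?_, Ideal.mul_mem_left _ _ (hsq _ le_rfl), Ideal.mul_mem_right _ _ (hsq _ le_rfl),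
    sub_mem (hsq _ (by norm_num)) (Ideal.mul_mem_right _ _ (hsq _ le_rfl)),
    Ideal.mul_mem_left _ _ (hc _), Ideal.mul_mem_left _ _ (hc _), Ideal.mul_mem_left _ _ (hc _),
    Ideal.mul_mem_left _ _ (hc _)⟩
  by_cases hi : i ∈ S
  · exact Ideal.mul_mem_left _ _ (X_mem_nonDivisorsIdeal (hExponent_apply_eq_zero
      (by simpa using hS i hi)))
  · exact Ideal.mul_mem_right _ _ (X_mem_nonDivisorsIdeal (hExponent_apply_eq_zero (by simpa)))

theorem component_eq_span_prod_X_h {S : Finset ℕ} (hS : ∀ i ∈ S, i + 1 ∉ S) :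
    component S.card (∑ i ∈ S, 2 ^ i) =
      Submodule.span (ZMod 2) {mkE (∏ i ∈ S, X (Gen.h i))} := by
  rw [component, bihomogeneous_eq_span_monomial_hExponent hS, Submodule.map_span,
    Set.image_singleton, prod_X_h_eq_monomial]
  rfl

theorem mkE_prod_X_h_ne_zero {S : Finset ℕ} (hS : ∀ i ∈ S, i + 1 ∉ S) :
    mkE (∏ i ∈ S, X (Gen.h i)) ≠ 0 := by
  rw [prod_X_h_eq_monomial, mkE, Ideal.Quotient.mkₐ_eq_mk, Ne, Ideal.Quotient.eq_zero_iff_mem]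
  exact fun h =>
    monomial_one_notMem_nonDivisorsIdeal _ (relIdeal_le_nonDivisorsIdeal_hExponent hS h)

/-- For all `s, t, u ≥ 2`, `E^{4, 4 + n_{s,t,u}} = E^{4, 2^{s+t+u}+2^{s+t}+2^s+1}` is
one-dimensional over `F₂` with basis the class of `h₀h_sh_{s+t}h_{s+t+u}`; in particular this
monomial is nonzero in `E`. -/
theorem stmt4 (s t u : ℕ) (hs : 2 ≤ s) (ht : 2 ≤ t) (hu : 2 ≤ u) :
    component 4 (2 ^ (s + t + u) + 2 ^ (s + t) + 2 ^ s + 1) =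
        Submodule.span (ZMod 2)
          {mkE (X (Gen.h 0) * X (Gen.h s) * X (Gen.h (s + t)) * X (Gen.h (s + t + u)))} ∧
      mkE (X (Gen.h 0) * X (Gen.h s) * X (Gen.h (s + t)) * X (Gen.h (s + t + u))) ≠ 0 := by
  set S : Finset ℕ := {0, s, s + t, s + t + u}
  have hS : ∀ i ∈ S, i + 1 ∉ S := by
    simp only [S, Finset.mem_insert, Finset.mem_singleton]
    omega
  have hval : S.val = {0, s, s + t, s + t + u} := by
    simp (disch := simp; omega) [S, Multiset.ndinsert_of_notMem]
  have hcard : S.card = 4 := by simp [← Finset.card_val, hval]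
  have hsum : ∑ i ∈ S, 2 ^ i = 2 ^ (s + t + u) + 2 ^ (s + t) + 2 ^ s + 1 := by
    simp [Finset.sum_eq_multiset_sum, hval]; ring
  have hprod : ∏ i ∈ S, (X (Gen.h i) : P) =
      X (Gen.h 0) * X (Gen.h s) * X (Gen.h (s + t)) * X (Gen.h (s + t + u)) := by
    simp [Finset.prod_eq_multiset_prod, hval]; ring
  rw [← hcard, ← hsum, ← hprod]
  exact ⟨component_eq_span_prod_X_h hS, mkE_prod_X_h_ne_zero hS⟩
end
end
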